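/- arXiv:2207.14458 — 5 statements merged into one kernel-verified Lean document; each statement's English description precedes it below -/
import Mathlib

section
/- Let p be a prime and d ≥ 1. For each polynomial P of degree at most d over GF(p), define S(P) = { x·p + P(x) : x ∈ GF(p) } (interpreting elements of GF(p) as natural numbers less than p). Then for distinct polynomials P and Q, |S(P) ∩ S(Q)| ≤ d. -/
theorem stmt1 (p d : ℕ) [Fact p.Prime] (hd : 1 ≤ d)
    (P Q : Polynomial (ZMod p)) (hP : P.natDegree ≤ d) (hQ : Q.natDegree ≤ d) (hne : P ≠ Q) :
    ((Finset.univ.image fun x : ZMod p => x.val * p + (P.eval x).val) ∩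
      (Finset.univ.image fun x : ZMod p => x.val * p + (Q.eval x).val)).card ≤ d := by
  haveI : NeZero p := ⟨(Fact.out : p.Prime).ne_zero⟩
  have hpos : 0 < p := (Fact.out : p.Prime).pos
  have hdec : ∀ (x y a b : ZMod p),
      x.val * p + a.val = y.val * p + b.val → x = y ∧ a = b := by
    intro x y a b h
    have hab : a.val = b.val := by
      have h1 : (x.val * p + a.val) % p = a.val := by
        rw [Nat.mul_add_mod', Nat.mod_eq_of_lt (ZMod.val_lt a)]
      have h2 : (y.val * p + b.val) % p = b.val := by
        rw [Nat.mul_add_mod', Nat.mod_eq_of_lt (ZMod.val_lt b)]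
      rw [h, h2] at h1; exact h1.symm
    have hxy : x.val = y.val := by
      have : x.val * p = y.val * p := by omega
      exact Nat.eq_of_mul_eq_mul_right hpos this
    exact ⟨ZMod.val_injective p hxy, ZMod.val_injective p hab⟩
  set S : Finset (ZMod p) := Finset.univ.filter (fun x => P.eval x = Q.eval x) with hS
  have hsub : ((Finset.univ.image fun x : ZMod p => x.val * p + (P.eval x).val) ∩
      (Finset.univ.image fun x : ZMod p => x.val * p + (Q.eval x).val)) ⊆
      S.image (fun x : ZMod p => x.val * p + (P.eval x).val) := by
    intro n hn
    simp only [Finset.mem_inter, Finset.mem_image, Finset.mem_univ, true_and] at hn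
    obtain ⟨⟨x, hx⟩, ⟨y, hy⟩⟩ := hn
    have h := hdec x y (P.eval x) (Q.eval y) (by rw [hx, hy])
    obtain ⟨rfl, heq⟩ := h
    refine Finset.mem_image.2 ⟨x, ?_, hx⟩
    simp [hS, heq]
  calc _ ≤ (S.image (fun x : ZMod p => x.val * p + (P.eval x).val)).card :=
        Finset.card_le_card hsub
    _ ≤ S.card := Finset.card_image_le
    _ ≤ (P - Q).roots.toFinset.card := by
        apply Finset.card_le_card
        intro x hx
        simp only [hS, Finset.mem_filter, Finset.mem_univ, true_and] at hx
        rw [Multiset.mem_toFinset, Polynomial.mem_roots (sub_ne_zero.2 hne)]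
        simp [Polynomial.IsRoot, hx]
    _ ≤ (P - Q).roots.card := Multiset.toFinset_card_le _
    _ ≤ (P - Q).natDegree := Polynomial.card_roots' _
    _ ≤ d := le_trans (Polynomial.natDegree_sub_le P Q) (max_le hP hQ)
end

section
/- Let p be a prime and d ≥ 1, and suppose k·d < p. Then the family F = { S(P) : P a polynomial of degree at most d over GF(p) }, where S(P) = { x·p + P(x) : x ∈ GF(p) }, is k-cover-free: for any polynomial P₀ and any k polynomials P₁,…,P_k all distinct from P₀, S(P₀) is not contained in S(P₁) ∪ ⋯ ∪ S(P_k). -/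
theorem stmt2 (p d k : ℕ) [Fact p.Prime] (hkd : k * d < p)
    (P₀ : Polynomial (ZMod p)) (P : Fin k → Polynomial (ZMod p))
    (hP₀ : P₀.natDegree ≤ d) (hP : ∀ i, (P i).natDegree ≤ d)
    (hne : ∀ i, P i ≠ P₀) :
    ¬ ((Finset.univ.image fun x : ZMod p => x.val * p + (P₀.eval x).val) ⊆
        Finset.univ.biUnion fun i : Fin k =>
          Finset.univ.image fun x : ZMod p => x.val * p + ((P i).eval x).val) := by
  intro h
  have hp : 0 < p := (Fact.out : p.Prime).pos
  haveI : NeZero p := ⟨hp.ne'⟩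
  set R : Fin k → Finset (ZMod p) := fun i => (P₀ - P i).roots.toFinset with hR
  have hsub : (Finset.univ : Finset (ZMod p)) ⊆ Finset.univ.biUnion R := by
    intro x _
    have hx : x.val * p + (P₀.eval x).val ∈
        Finset.univ.biUnion fun i : Fin k =>
          Finset.univ.image fun y : ZMod p => y.val * p + ((P i).eval y).val := by
      apply h
      exact Finset.mem_image.mpr ⟨x, Finset.mem_univ _, rfl⟩
    rw [Finset.mem_biUnion] at hx
    obtain ⟨i, -, hi⟩ := hx
    rw [Finset.mem_image] at hi
    obtain ⟨y, -, hy⟩ := hi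
    -- from hy : y.val * p + ((P i).eval y).val = x.val * p + (P₀.eval x).val
    have hlt1 : ((P i).eval y).val < p := ZMod.val_lt _
    have hlt2 : (P₀.eval x).val < p := ZMod.val_lt _
    have hdiv : y.val = x.val := by
      have h1 : (y.val * p + ((P i).eval y).val) / p = y.val := by
        rw [add_comm, Nat.add_mul_div_right _ _ hp, Nat.div_eq_of_lt hlt1]; omega
      have h2 : (x.val * p + (P₀.eval x).val) / p = x.val := by
        rw [add_comm, Nat.add_mul_div_right _ _ hp, Nat.div_eq_of_lt hlt2]; omega
      rw [← h1, hy, h2]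
    have hxy : y = x := ZMod.val_injective p hdiv
    rw [hdiv] at hy
    have hvals : ((P i).eval y).val = (P₀.eval x).val := by omega
    have heval : (P i).eval x = P₀.eval x := by
      rw [← hxy] at hvals ⊢
      exact ZMod.val_injective p hvals
    refine Finset.mem_biUnion.mpr ⟨i, Finset.mem_univ _, ?_⟩
    simp only [hR, Multiset.mem_toFinset]
    rw [Polynomial.mem_roots (fun h0 => hne i (sub_eq_zero.mp h0).symm)]
    simp [Polynomial.IsRoot, heval]
  have hcard : p ≤ k * d := by
    calc p = (Finset.univ : Finset (ZMod p)).card := by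
            rw [Finset.card_univ, ZMod.card]
      _ ≤ (Finset.univ.biUnion R).card := Finset.card_le_card hsub
      _ ≤ ∑ i : Fin k, (R i).card := Finset.card_biUnion_le
      _ ≤ ∑ _i : Fin k, d := by
            apply Finset.sum_le_sum
            intro i _
            have hne0 : P₀ - P i ≠ 0 := fun h0 =>
              hne i (sub_eq_zero.mp h0).symm
            calc (R i).card ≤ (P₀ - P i).roots.card :=
                  (P₀ - P i).roots.toFinset_card_le
              _ ≤ (P₀ - P i).natDegree := Polynomial.card_roots' _
              _ ≤ d := le_trans (Polynomial.natDegree_sub_le _ _) (by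
                    simp [hP₀, hP i])
      _ = k * d := by simp [Finset.sum_const, mul_comm]
  omega
end

section
/- Let p be a prime and d, k, ρ positive integers with k·d < (ρ+1)·p. Then the family F = { S(P) : P a polynomial of degree at most d over GF(p) }, with S(P) = { x·p + P(x) : x ∈ GF(p) }, is k-union-(ρ+1)-cover-free: for any P₀ and any k polynomials P₁,…,P_k distinct from P₀, there exists an element y ∈ S(P₀) that belongs to S(P_i) for at most ρ indices i ∈ {1,…,k}. -/
lemma decode_aux {p : ℕ} [Fact p.Prime] (x x' a b : ZMod p)
    (h : x.val * p + a.val = x'.val * p + b.val) : x = x' ∧ a = b := by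
  have hp : 0 < p := (Fact.out : p.Prime).pos
  have ha : a.val < p := ZMod.val_lt a
  have hb : b.val < p := ZMod.val_lt b
  have hx : x.val = x'.val := by
    have h1 : (a.val + x.val * p) / p = (b.val + x'.val * p) / p := by
      rw [show a.val + x.val * p = b.val + x'.val * p by omega]
    rwa [Nat.add_mul_div_right _ _ hp, Nat.add_mul_div_right _ _ hp,
      Nat.div_eq_of_lt ha, Nat.div_eq_of_lt hb, Nat.zero_add, Nat.zero_add] at h1
  have hab : a.val = b.val := by rw [hx] at h; omega
  exact ⟨ZMod.val_injective p hx, ZMod.val_injective p hab⟩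

theorem stmt3 (p d k ρ : ℕ) [Fact p.Prime] (hd : 0 < d) (hk : 0 < k) (hρ : 0 < ρ)
    (hkd : k * d < (ρ + 1) * p)
    (P₀ : Polynomial (ZMod p)) (P : Fin k → Polynomial (ZMod p))
    (hP₀ : P₀.natDegree ≤ d) (hP : ∀ i, (P i).natDegree ≤ d)
    (hne : ∀ i, P i ≠ P₀) :
    ∃ y ∈ (Finset.univ.image fun x : ZMod p => x.val * p + (P₀.eval x).val),
      (Finset.univ.filter fun i : Fin k =>
        y ∈ Finset.univ.image fun x : ZMod p => x.val * p + ((P i).eval x).val).card ≤ ρ := by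
  by_contra hcon
  push_neg at hcon
  -- For each x, the count of i with (P i).eval x = P₀.eval x is ≥ ρ + 1
  have key : ∀ x : ZMod p,
      ρ + 1 ≤ (Finset.univ.filter fun i : Fin k => (P i).eval x = P₀.eval x).card := by
    intro x
    have hmem : (x.val * p + (P₀.eval x).val) ∈
        (Finset.univ.image fun x : ZMod p => x.val * p + (P₀.eval x).val) :=
      Finset.mem_image_of_mem _ (Finset.mem_univ x)
    have := hcon _ hmem
    refine le_trans (Nat.succ_le_of_lt this) (Finset.card_le_card ?_)
    intro i hi
    simp only [Finset.mem_filter, Finset.mem_image, Finset.mem_univ, true_and] at hi ⊢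
    obtain ⟨x', hx'⟩ := hi
    obtain ⟨h1, h2⟩ := decode_aux x' x ((P i).eval x') (P₀.eval x) hx'
    rw [← h1] at h2 ⊢
    exact h2
  -- For each i, the count of x with (P i).eval x = P₀.eval x is ≤ d
  have root_bound : ∀ i : Fin k,
      (Finset.univ.filter fun x : ZMod p => (P i).eval x = P₀.eval x).card ≤ d := by
    intro i
    set Q := P i - P₀ with hQ
    have hQne : Q ≠ 0 := sub_ne_zero_of_ne (hne i)
    have hdeg : Q.natDegree ≤ d :=
      le_trans (Polynomial.natDegree_sub_le _ _) (max_le (hP i) hP₀)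
    have hsub : (Finset.univ.filter fun x : ZMod p => (P i).eval x = P₀.eval x)
        ⊆ Q.roots.toFinset := by
      intro x hx
      simp only [Finset.mem_filter, Finset.mem_univ, true_and] at hx
      rw [Multiset.mem_toFinset, Polynomial.mem_roots hQne]
      simp [hQ, Polynomial.IsRoot, sub_eq_zero, hx]
    calc (Finset.univ.filter fun x : ZMod p => (P i).eval x = P₀.eval x).card
        ≤ Q.roots.toFinset.card := Finset.card_le_card hsub
      _ ≤ Multiset.card Q.roots := Q.roots.toFinset_card_le
      _ ≤ Q.natDegree := Q.card_roots'
      _ ≤ d := hdeg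
  -- double counting
  have count_eq : ∑ x : ZMod p, (Finset.univ.filter fun i : Fin k => (P i).eval x = P₀.eval x).card
      = ∑ i : Fin k, (Finset.univ.filter fun x : ZMod p => (P i).eval x = P₀.eval x).card := by
    simp only [Finset.card_filter]
    exact Finset.sum_comm
  have lower : (ρ + 1) * p ≤
      ∑ x : ZMod p, (Finset.univ.filter fun i : Fin k => (P i).eval x = P₀.eval x).card := by
    calc (ρ + 1) * p = Finset.univ.card • (ρ + 1) := by
          simp [ZMod.card, mul_comm]
      _ ≤ _ := Finset.card_nsmul_le_sum _ _ _ (fun x _ => key x)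
  have upper : ∑ i : Fin k, (Finset.univ.filter fun x : ZMod p => (P i).eval x = P₀.eval x).card
      ≤ k * d := by
    calc _ ≤ ∑ _i : Fin k, d := Finset.sum_le_sum (fun i _ => root_bound i)
      _ = k * d := by simp [mul_comm]
  omega
end

section
/- Consider the update rule on pairs (â, ã) ∈ [λ]×[λ] (λ prime) given by (â, ã) ↦ (â, (â + ã) mod λ) when a 'blocked' predicate holds, and (â, ã) ↦ (0, ã) otherwise. For two vertices u, v whose states evolve under this rule, if at the end of round t their full values a = â·λ + ã coincide with â ≥ 1, then their values already coincided at round t−1 with â ≥ 1. -/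
theorem stmt16 (L : ℕ) (hL : L.Prime) (au av au' av' : ℕ)
    (hau : au < L ^ 2) (hav : av < L ^ 2)
    (hu : au' = au / L * L + ((au / L + au % L) % L) ∨ au' = au % L)
    (hv : av' = av / L * L + ((av / L + av % L) % L) ∨ av' = av % L)
    (heq : au' = av') (hge : L ≤ au') :
    au = av ∧ L ≤ au := by
  have hLpos : 0 < L := hL.pos
  rcases hu with hu | hu
  · rcases hv with hv | hv
    · -- both blocked
      have hmu : (au / L + au % L) % L < L := Nat.mod_lt _ hLpos
      have hmv : (av / L + av % L) % L < L := Nat.mod_lt _ hLpos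
      have e : au / L * L + ((au / L + au % L) % L)
          = av / L * L + ((av / L + av % L) % L) := by rw [← hu, ← hv, heq]
      have h1 : (au / L * L + ((au / L + au % L) % L)) / L = au / L := by
        rw [Nat.add_comm, Nat.add_mul_div_right _ _ hLpos, Nat.div_eq_of_lt hmu]
        omega
      have h2 : (av / L * L + ((av / L + av % L) % L)) / L = av / L := by
        rw [Nat.add_comm, Nat.add_mul_div_right _ _ hLpos, Nat.div_eq_of_lt hmv]
        omega
      have hdiv : au / L = av / L := by rw [← h1, e, h2]
      have hmul : au / L * L = av / L * L := by rw [hdiv]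
      have hmodeq : (au / L + au % L) % L = (av / L + av % L) % L := by omega
      have hmod : au % L = av % L := by
        rw [hdiv] at hmodeq
        have hc : Nat.ModEq L (av / L + au % L) (av / L + av % L) := hmodeq
        have hc2 := Nat.ModEq.add_left_cancel' (av / L) hc
        have h1' : au % L < L := Nat.mod_lt _ hLpos
        have h2' : av % L < L := Nat.mod_lt _ hLpos
        simpa [Nat.ModEq, Nat.mod_eq_of_lt h1', Nat.mod_eq_of_lt h2'] using hc2
      have heqav : au = av := by
        have d1 := Nat.div_add_mod au L
        have d2 := Nat.div_add_mod av L
        have : L * (au / L) = L * (av / L) := by rw [hdiv]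
        omega
      have hge' : L ≤ au / L * L + ((au / L + au % L) % L) := by rw [← hu]; exact hge
      have hdpos : 1 ≤ au / L := by
        rcases Nat.eq_zero_or_pos (au / L) with h0 | h0
        · rw [h0] at hge'
          simp at hge'
          have := Nat.mod_lt au hLpos
          have := Nat.mod_lt av hLpos
          omega
        · exact h0
      refine ⟨heqav, ?_⟩
      calc L = L * 1 := (Nat.mul_one L).symm
        _ ≤ L * (au / L) := Nat.mul_le_mul_left L hdpos
        _ ≤ au := Nat.mul_div_le au L
    · have : av % L < L := Nat.mod_lt _ hLpos
      omega
  · have : au % L < L := Nat.mod_lt _ hLpos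
    omega
end

section
/- Fix a graph G of maximum degree Δ and a proper coloring φ of G with colors in [n]. Suppose F = {S^(k) : k ∈ [n]} is a Δ-cover-free family of subsets of a ground set U. Define a new coloring φ'(v) = min( S^(φ(v)) \ ⋃_{u ∈ N(v)} S^(φ(u)) ). Then φ' is well-defined (the set is nonempty) and is a proper coloring of G with colors in U. -/
theorem stmt18 {V : Type*} [Fintype V] [DecidableEq V] (G : SimpleGraph V) [DecidableRel G.Adj]
    (Δ n : ℕ) (hn : Δ < n) (hdeg : ∀ v, G.degree v ≤ Δ)
    (φ : V → Fin n) (hproper : ∀ u v, G.Adj u v → φ u ≠ φ v)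
    (S : Fin n → Finset ℕ)
    (hcf : ∀ (k₀ : Fin n) (f : Fin Δ → Fin n), (∀ i, f i ≠ k₀) →
      ¬ (S k₀ ⊆ Finset.univ.biUnion fun i => S (f i))) :
    ∃ hne : ∀ v, (S (φ v) \ (G.neighborFinset v).biUnion fun u => S (φ u)).Nonempty,
      ∀ u v, G.Adj u v →
        (S (φ u) \ (G.neighborFinset u).biUnion fun w => S (φ w)).min' (hne u) ≠
        (S (φ v) \ (G.neighborFinset v).biUnion fun w => S (φ w)).min' (hne v) := by
  have key : ∀ v, (S (φ v) \ (G.neighborFinset v).biUnion fun u => S (φ u)).Nonempty := by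
    intro v
    rw [Finset.sdiff_nonempty]
    intro hsub
    set T := (G.neighborFinset v).image φ with hT
    have hTcard : T.card ≤ Δ := le_trans Finset.card_image_le (by simpa using hdeg v)
    have hTv : ∀ t ∈ T, t ≠ φ v := by
      intro t ht
      obtain ⟨u, hu, rfl⟩ := Finset.mem_image.mp ht
      exact fun h => hproper v u ((SimpleGraph.mem_neighborFinset G v u).mp hu) h.symm
    rcases Nat.eq_zero_or_pos Δ with hΔ | hΔ
    · -- Δ = 0 : no neighbors
      subst hΔ
      refine hcf (φ v) Fin.elim0 (fun i => i.elim0) ?_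
      intro x hx
      have := hsub hx
      simp only [Finset.mem_biUnion, SimpleGraph.mem_neighborFinset] at this
      obtain ⟨u, hu, _⟩ := this
      exact absurd (le_trans (SimpleGraph.degree_pos_iff_exists_adj G v |>.mpr ⟨u, hu⟩) (hdeg v)) (by simp)
    · -- Δ > 0 : pick a default color c ≠ φ v
      have hn1 : 1 < n := lt_of_le_of_lt hΔ hn
      have : Nontrivial (Fin n) := Fin.nontrivial_iff_two_le.mpr hn1
      obtain ⟨c, hc⟩ := exists_ne (φ v)
      set l := T.toList with hl
      have hlen : l.length ≤ Δ := by simpa [hl, Finset.length_toList] using hTcard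
      let f : Fin Δ → Fin n := fun i => l.getD i c
      have hfne : ∀ i, f i ≠ φ v := by
        intro i
        by_cases h : (i : ℕ) < l.length
        · have : f i ∈ l := by
            simp only [f, List.getD_eq_getElem l c h]
            exact List.getElem_mem h
          exact hTv _ (Finset.mem_toList.mp this)
        · have : f i = c := List.getD_eq_default l c (Nat.not_lt.mp h)
          rw [this]; exact hc
      refine hcf (φ v) f hfne ?_
      intro x hx
      have := hsub hx
      simp only [Finset.mem_biUnion, SimpleGraph.mem_neighborFinset] at this
      obtain ⟨u, hu, hxu⟩ := this
      have hmem : φ u ∈ T := Finset.mem_image_of_mem φ ((SimpleGraph.mem_neighborFinset G v u).mpr hu)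
      obtain ⟨j, hj, hget⟩ := List.mem_iff_getElem.mp (Finset.mem_toList.mpr hmem)
      refine Finset.mem_biUnion.mpr ⟨⟨j, lt_of_lt_of_le hj hlen⟩, Finset.mem_univ _, ?_⟩
      have : f ⟨j, lt_of_lt_of_le hj hlen⟩ = φ u := by
        simp only [f, List.getD_eq_getElem l c hj]; exact hget
      rwa [this]
  refine ⟨key, ?_⟩
  intro u v huv h
  have hu := Finset.min'_mem _ (key u)
  have hv := Finset.min'_mem _ (key v)
  rw [h] at hu
  rw [Finset.mem_sdiff] at hu hv
  exact hu.2 (Finset.mem_biUnion.mpr ⟨v, (SimpleGraph.mem_neighborFinset G u v).mpr huv, hv.1⟩)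
end
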